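/- arXiv:2506.10951 — 6 statements merged into one kernel-verified Lean document; each statement's English description precedes it below -/
import Mathlib

section
/- Let F be a filter of sets on X and φ : X → [0,1]. Then ⨆_{A ∈ F^#} ⨅_{x ∈ A} φ(x) = ⨅_{F ∈ F} ⨆_{x ∈ F} φ(x), where F^# = {B ⊆ X : B ∩ F ≠ ∅ for all F ∈ F} is the grill of F. -/
open Filter Set
open scoped ENNReal

noncomputable section
attribute [local instance] Classical.propDecidable

instance : Fact ((0:ℝ) ≤ 1) := ⟨zero_le_one⟩

/-- The value quantale `V = [0,1]` with multiplication. -/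
abbrev V := unitInterval

/-- Residuation `t ⊘ x` on `[0,1]`: `min (t/x) 1` if `x ≠ 0`, and `1` if `x = 0`. -/
def oslash (t x : V) : V :=
  if x = 0 then 1
  else ⟨min (t.1 / x.1) 1, ⟨le_min (div_nonneg t.2.1 x.2.1) zero_le_one, min_le_right _ _⟩⟩

/-- The grill of a filter: sets meeting every member of the filter. -/
def grill {X : Type*} (F : Filter X) : Set (Set X) := {B | ∀ S ∈ F, (B ∩ S).Nonempty}

/-- `limsup` of a `V`-valued function along a family of sets. -/
def limsupF {X : Type*} (F : Set (Set X)) (f : X → V) : V := ⨅ s ∈ F, ⨆ t ∈ s, f t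

/-- `liminf` of a `V`-valued function along a family of sets. -/
def liminfF {X : Type*} (F : Set (Set X)) (f : X → V) : V := ⨆ s ∈ F, ⨅ t ∈ s, f t

/-- A convergence approach space structure on `X`, valued in `V = [0,1]`:
`lam F x` measures how well `F` converges to `x` (1 = full convergence);
finer filters converge better, and principal ultrafilters fully converge. -/
structure CAS (X : Type*) where
  lam : Filter X → X → V
  mono : ∀ ⦃F G : Filter X⦄, F ≤ G → lam G ≤ lam F
  centered : ∀ x : X, lam (pure x) x = 1

/-- The standard approach structure on `V`. -/
def lamV (F : Filter V) (v : V) : V := oslash v (⨆ A ∈ grill F, sInf A)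

/-- `f : X → V` is a contraction into `(V, λ_V)` (characterized pointwise). -/
def Contr {X : Type*} (Λ : CAS X) (f : X → V) : Prop :=
  ∀ (F : Filter X) (x : X), Λ.lam F x ≤ oslash (f x) (limsupF F.sets f)

/-- Indicator function of a set, valued in `V`. -/
def theta {X : Type*} (A : Set X) : X → V := fun x => if x ∈ A then 1 else 0

/-- The lower-hull operator: the smallest contraction above `f`. -/
def Cop {X : Type*} (Λ : CAS X) (f : X → V) : X → V :=
  sInf {g : X → V | Contr Λ g ∧ f ≤ g}

/-- The adherence function of a set `A`. -/
def adhSet {X : Type*} (Λ : CAS X) (A : Set X) : X → V :=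
  fun x => ⨆ (U : Ultrafilter X) (_ : A ∈ U), Λ.lam U x

/-- The adherence function of a filter. -/
def adhFilter {X : Type*} (Λ : CAS X) (F : Filter X) : X → V :=
  fun x => ⨆ (U : Ultrafilter X) (_ : (U : Filter X) ≤ F), Λ.lam U x

/-- Adherence in `(V, λ_V)` of a subset of `V`. -/
def adhV (A : Set V) (v : V) : V := ⨆ (U : Ultrafilter V) (_ : A ∈ U), lamV U v

section Grill

variable {X α : Type*} (F : Filter X)

theorem iSup_grill_iInf_le [CompleteLattice α] (φ : X → α) :
    ⨆ A ∈ grill F, ⨅ x ∈ A, φ x ≤ ⨅ s ∈ F, ⨆ x ∈ s, φ x := by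
  refine iSup₂_le fun A hA => le_iInf₂ fun s hs => ?_
  obtain ⟨x, hxA, hxs⟩ := hA s hs
  exact (iInf₂_le x hxA).trans (le_iSup₂ (f := fun x (_ : x ∈ s) => φ x) x hxs)

theorem range_mem_grill (g : ∀ s : F.sets, ↥(s : Set X)) : range (fun s => (g s : X)) ∈ grill F :=
  fun s hs => ⟨g ⟨s, hs⟩, mem_range_self _, (g ⟨s, hs⟩).2⟩

/-- Complete distributivity rewrites `⨅ s ∈ F, ⨆ x ∈ s, φ x` as a supremum over choice functions
`g s ∈ s`, and the range of each choice function lies in the grill. -/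
theorem iInf_iSup_le_iSup_grill_iInf [CompletelyDistribLattice α] (φ : X → α) :
    ⨅ s ∈ F, ⨆ x ∈ s, φ x ≤ ⨆ A ∈ grill F, ⨅ x ∈ A, φ x := by
  have hchoice : ⨅ s ∈ F, ⨆ x ∈ s, φ x = ⨆ g : ∀ s : F.sets, ↥(s : Set X), ⨅ s, φ (g s) := by
    rw [iInf_subtype']
    simp_rw [iSup_subtype']
    rw [iInf_iSup_eq]
    rfl
  rw [hchoice]
  refine iSup_le fun g => le_iSup₂_of_le _ (range_mem_grill F g) (le_iInf₂ ?_)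
  rintro _ ⟨s, rfl⟩
  exact iInf_le _ s

theorem iSup_grill_iInf_eq [CompletelyDistribLattice α] (φ : X → α) :
    ⨆ A ∈ grill F, ⨅ x ∈ A, φ x = ⨅ s ∈ F, ⨆ x ∈ s, φ x :=
  (iSup_grill_iInf_le F φ).antisymm (iInf_iSup_le_iSup_grill_iInf F φ)

end Grill

theorem stmt4_general {X : Type*} (F : Filter X) (φ : X → V) :
    ⨆ A ∈ grill F, ⨅ x ∈ A, φ x = ⨅ s ∈ F, ⨆ x ∈ s, φ x :=
  iSup_grill_iInf_eq F φ

/-- for a proper filter `F` on `X` and `φ : X → [0,1]`,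
`⨆_{A ∈ F^#} ⨅_{x ∈ A} φ x = ⨅_{F ∈ F} ⨆_{x ∈ F} φ x`. -/
theorem stmt4 {X : Type*} (F : Filter X) [F.NeBot] (φ : X → V) :
    ⨆ A ∈ grill F, ⨅ x ∈ A, φ x = ⨅ s ∈ F, ⨆ x ∈ s, φ x :=
  stmt4_general F φ
end
end

section
/- In the approach structure λ_V on V = [0,1] defined by λ_V(F)(v) = v ⊘ (⨆_{A ∈ F^#} ⨅ A), the adherence of a nonempty subset A ⊆ V at v, defined as adh_V A(v) = ⨆_{U ultrafilter containing A} λ_V(U)(v), equals v ⊘ ⨅ A. -/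
open Filter Set
open scoped ENNReal

noncomputable section
attribute [local instance] Classical.propDecidable

open Topology

lemma oslash_antitone (t : V) : Antitone (oslash t) := by
  intro x y hxy
  unfold oslash
  by_cases hx : x = 0
  · rw [if_pos hx]
    split
    · exact le_rfl
    · exact Subtype.mk_le_mk.mpr (min_le_right _ _)
  · have hy : y ≠ 0 := fun hy => hx (le_antisymm (hy ▸ hxy) x.2.1)
    have hx_pos : (0 : ℝ) < x := lt_of_le_of_ne x.2.1 (Ne.symm (Subtype.coe_ne_coe.mpr hx))
    rw [if_neg hx, if_neg hy]
    exact Subtype.mk_le_mk.mpr (min_le_min_right _ (div_le_div_of_nonneg_left t.2.1 hx_pos hxy))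

lemma mem_grill_of_mem {X : Type*} {F : Filter X} [F.NeBot] {A : Set X} (hA : A ∈ F) :
    A ∈ grill F :=
  fun _ hS => nonempty_of_mem (inter_mem hA hS)

lemma sInf_le_iSup_grill_sInf {X : Type*} [CompleteLattice X] {F : Filter X} [F.NeBot]
    {A : Set X} (hA : A ∈ F) : sInf A ≤ ⨆ B ∈ grill F, sInf B :=
  le_biSup sInf (mem_grill_of_mem hA)

/-- A set meeting every neighbourhood of `a` cannot have its infimum above `a`. -/
lemma iSup_grill_sInf_le_of_le_nhds {X : Type*} [CompleteLinearOrder X] [TopologicalSpace X]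
    [ClosedIciTopology X] {F : Filter X} {a : X} (hF : F ≤ 𝓝 a) :
    ⨆ B ∈ grill F, sInf B ≤ a := by
  refine iSup₂_le fun B hB => not_lt.mp fun ha => ?_
  obtain ⟨b, hbB, hb⟩ := hB _ (hF (Iio_mem_nhds ha))
  exact (not_lt.mpr (sInf_le hbB)) hb

/-- in `(V, λ_V)`, the adherence of a nonempty `A ⊆ V` at `v`
is `v ⊘ ⨅ A`. -/
theorem stmt8 (A : Set V) (hA : A.Nonempty) (v : V) :
    adhV A v = oslash v (sInf A) := by
  refine le_antisymm (iSup₂_le fun U hAU => oslash_antitone v (sInf_le_iSup_grill_sInf hAU)) ?_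
  -- an ultrafilter on `A` converging to `sInf A` realises the supremum
  have : (𝓝[A] (sInf A)).NeBot :=
    mem_closure_iff_nhdsWithin_neBot.mp ((isGLB_sInf A).mem_closure hA)
  let U := Ultrafilter.of (𝓝[A] (sInf A))
  have hAU : A ∈ U := Ultrafilter.of_le _ self_mem_nhdsWithin
  have hU : (U : Filter V) ≤ 𝓝 (sInf A) := (Ultrafilter.of_le _).trans nhdsWithin_le_nhds
  calc oslash v (sInf A) ≤ lamV U v := oslash_antitone v (iSup_grill_sInf_le_of_le_nhds hU)
    _ ≤ adhV A v := le_iSup₂ (f := fun (W : Ultrafilter V) (_ : A ∈ W) => lamV W v) U hAU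
end
end

section
/- In V = [0,1] with residuation ⊘, for any nonempty A ⊆ V, ε ∈ V, and v ∈ V: v ⊘ ⨅ A ≥ (v ⊘ ⨅ A^{(ε)}) · ε, where A^{(ε)} = {w ∈ V : w ⊘ ⨅ A ≥ ε} = {w ∈ V : w ≥ (⨅ A) · ε}. (This is the approach-space diagonal axiom for (V, λ_V).) -/
open Filter Set
open scoped ENNReal

noncomputable section
attribute [local instance] Classical.propDecidable

/- The whole statement is the residuation adjunction `ε ≤ w ⊘ a ↔ a · ε ≤ w` of the quantale
`([0,1], ·)`. It identifies `A^{(ε)}` with the up-set of `a · ε`, where `a = ⨅ A`, so that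
`⨅ A^{(ε)} = a · ε`; the inequality then reduces, by the adjunction again, to the counit
`(a · ε) · (v ⊘ (a · ε)) ≤ v`. -/

lemma le_oslash_iff {ε w a : V} : ε ≤ oslash w a ↔ a * ε ≤ w := by
  unfold oslash
  split_ifs with ha
  · simp [ha, unitInterval.le_one']
  · have ha₀ : (0 : ℝ) < a := unitInterval.pos_iff_ne_zero.mpr ha
    rw [← Subtype.coe_le_coe, ← Subtype.coe_le_coe, Set.Icc.coe_mul, le_min_iff,
      le_div_iff₀ ha₀, mul_comm]
    exact and_iff_left ε.2.2

lemma mul_oslash_le (t x : V) : x * oslash t x ≤ t :=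
  le_oslash_iff.mp le_rfl

theorem stmt9_general (A : Set V) (ε v : V) :
    {w : V | ε ≤ oslash w (sInf A)} = {w : V | sInf A * ε ≤ w} ∧
    oslash v (sInf {w : V | ε ≤ oslash w (sInf A)}) * ε ≤ oslash v (sInf A) := by
  have hcut : {w : V | ε ≤ oslash w (sInf A)} = Ici (sInf A * ε) :=
    ext fun _ => le_oslash_iff
  refine ⟨hcut, ?_⟩
  rw [hcut, csInf_Ici, le_oslash_iff]
  calc sInf A * (oslash v (sInf A * ε) * ε)
      = sInf A * ε * oslash v (sInf A * ε) := by ac_rfl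
    _ ≤ v := mul_oslash_le v _

/-- the diagonal axiom for `(V, λ_V)`: for nonempty `A ⊆ V`,
`v ⊘ ⨅ A ≥ (v ⊘ ⨅ A^{(ε)}) · ε`, where
`A^{(ε)} = {w : w ⊘ ⨅A ≥ ε} = {w : w ≥ (⨅ A) · ε}`. -/
theorem stmt9 (A : Set V) (hA : A.Nonempty) (ε v : V) :
    {w : V | ε ≤ oslash w (sInf A)} = {w : V | sInf A * ε ≤ w} ∧
    oslash v (sInf {w : V | ε ≤ oslash w (sInf A)}) * ε ≤ oslash v (sInf A) :=
  stmt9_general A ε v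
end
end

section
/- Let (X, λ) be a convergence approach space and f, g : X → [0,1] contractions. Then the pointwise supremum f ∨ g is a contraction. -/
open Filter Set
open scoped ENNReal

noncomputable section
attribute [local instance] Classical.propDecidable

/-! `t ⊘ x` is the residual of multiplication on `[0,1]`: `r ≤ t ⊘ x ↔ r * x ≤ t`. Hence `f` is a
contraction iff `λ F x * limsup_F f ≤ f x`, and since `limsup_F (f ⊔ g) = limsup_F f ⊔ limsup_F g`
and multiplication distributes over `⊔`, the inequalities for `f` and `g` combine into the one for
`f ⊔ g`. -/

lemma le_oslash_iff_s13 {r t x : V} : r ≤ oslash t x ↔ r * x ≤ t := by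
  unfold oslash
  split_ifs with hx
  · simp [hx, unitInterval.le_one']
  · have hx' : (0 : ℝ) < x := unitInterval.pos_iff_ne_zero.2 hx
    rw [← Subtype.coe_le_coe, ← Subtype.coe_le_coe, Set.Icc.coe_mul]
    simp only [le_min_iff, unitInterval.le_one, and_true]
    exact le_div_iff₀ hx'

lemma limsupF_sets_eq_limsup {X : Type*} (F : Filter X) (f : X → V) :
    limsupF F.sets f = limsup f F :=
  limsup_eq_iInf_iSup.symm

lemma limsupF_sets_sup {X : Type*} (F : Filter X) (f g : X → V) :
    limsupF F.sets (f ⊔ g) = limsupF F.sets f ⊔ limsupF F.sets g := by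
  simp only [limsupF_sets_eq_limsup]
  exact limsup_max

/-- the pointwise supremum of two contractions is a contraction. -/
theorem stmt13 {X : Type*} (Λ : CAS X) (f g : X → V)
    (hf : Contr Λ f) (hg : Contr Λ g) : Contr Λ (f ⊔ g) := by
  intro F x
  rw [le_oslash_iff_s13, limsupF_sets_sup, mul_max]
  exact sup_le_sup (le_oslash_iff_s13.1 (hf F x)) (le_oslash_iff_s13.1 (hg F x))
end
end

section
/- Let (X, λ) be a convergence approach space, A ⊆ X and ε ∈ [0,1]. Define θ_A^ε(x) = 1 if x ∈ A and ε otherwise. Then θ_A^ε is a contraction into (V, λ_V) if and only if A is closed in the convergence τ_ε on X, where x ∈ lim_{τ_ε} F iff λ(F)(x) > ε (A is τ_ε-closed means: A ∈ F^# implies lim_{τ_ε}F ⊆ A). -/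
open Filter Set
open scoped ENNReal

noncomputable section
attribute [local instance] Classical.propDecidable

/-- `θ_A^ε`: value `1` on `A` and `ε` elsewhere. -/
def thetaEps {X : Type*} (A : Set X) (ε : V) : X → V := fun x => if x ∈ A then 1 else ε

/-! If `A` meets every member of `F`, then `limsup_F θ_A^ε = 1` and, since `t ⊘ 1 = t`, the
contraction inequality at `(F, x)` reads `λ(F)(x) ≤ θ_A^ε(x)`, which only bites for `x ∉ A`, where
it says `λ(F)(x) ≤ ε`. Otherwise some member of `F` misses `A`, so `limsup_F θ_A^ε ≤ ε ≤ θ_A^ε(x)`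
and the residuation is `1`: the inequality holds trivially. -/

lemma oslash_one (t : V) : oslash t 1 = t := by
  rw [oslash, if_neg one_ne_zero]
  exact Subtype.ext (by simp [min_eq_left t.2.2])

lemma oslash_eq_one_of_le {t v : V} (h : v ≤ t) : oslash t v = 1 := by
  rw [oslash]
  split_ifs with hv
  · rfl
  · have hv0 : (0 : ℝ) < v := lt_of_le_of_ne v.2.1 (Ne.symm (unitInterval.coe_ne_zero.mpr hv))
    exact Subtype.ext (min_eq_right ((one_le_div hv0).mpr h))

lemma le_thetaEps {X : Type*} (A : Set X) (ε : V) (x : X) : ε ≤ thetaEps A ε x := by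
  unfold thetaEps
  split_ifs
  exacts [unitInterval.le_one', le_rfl]

lemma limsupF_thetaEps_of_mem_grill {X : Type*} {A : Set X} {F : Filter X} (h : A ∈ grill F)
    (ε : V) : limsupF F.sets (thetaEps A ε) = 1 := by
  refine le_antisymm unitInterval.le_one' (le_iInf₂ fun s hs => ?_)
  obtain ⟨a, haA, has⟩ := h s hs
  calc (1 : V) = thetaEps A ε a := (if_pos haA).symm
    _ ≤ ⨆ t ∈ s, thetaEps A ε t := le_iSup₂ (f := fun t _ => thetaEps A ε t) a has

lemma limsupF_thetaEps_le_of_notMem_grill {X : Type*} {A : Set X} {F : Filter X}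
    (h : A ∉ grill F) (ε : V) : limsupF F.sets (thetaEps A ε) ≤ ε := by
  obtain ⟨s, hs, hdisj⟩ : ∃ s ∈ F, ¬(A ∩ s).Nonempty := by simpa [grill] using h
  refine (iInf₂_le s hs).trans (iSup₂_le fun t ht => ?_)
  rw [thetaEps, if_neg fun htA => hdisj ⟨t, htA, ht⟩]

lemma oslash_thetaEps_limsupF {X : Type*} (A : Set X) (ε : V) (F : Filter X) (x : X) :
    oslash (thetaEps A ε x) (limsupF F.sets (thetaEps A ε)) =
      if A ∈ grill F then thetaEps A ε x else 1 := by
  split_ifs with h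
  · rw [limsupF_thetaEps_of_mem_grill h, oslash_one]
  · exact oslash_eq_one_of_le ((limsupF_thetaEps_le_of_notMem_grill h ε).trans (le_thetaEps A ε x))

/-- `θ_A^ε` is a contraction iff `A` is closed in the convergence
`τ_ε` (`x ∈ lim_{τ_ε} F ↔ λ(F)(x) > ε`), i.e. iff whenever `A ∈ F^#`,
every `x` with `λ(F)(x) > ε` lies in `A`. -/
theorem stmt16 {X : Type*} (Λ : CAS X) (A : Set X) (ε : V) :
    Contr Λ (thetaEps A ε) ↔
    (∀ F : Filter X, A ∈ grill F → ∀ x : X, ε < Λ.lam F x → x ∈ A) := by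
  simp only [Contr, oslash_thetaEps_limsupF]
  refine forall_congr' fun F => ?_
  by_cases hA : A ∈ grill F
  · simp only [hA, if_true, true_imp_iff]
    refine forall_congr' fun x => ?_
    by_cases hx : x ∈ A <;> simp [thetaEps, hx, unitInterval.le_one']
  · simp [hA, unitInterval.le_one']
end
end

section
/- Let (X, λ) be a convergence approach space and A ⊆ X. Then C(adh A) = C(θ_A), i.e., the smallest contraction above the adherence function of A equals the smallest contraction above the indicator θ_A. Moreover θ_A is a contraction if and only if A is closed in the convergence r(λ) given by x ∈ lim_{r(λ)}F ⟺ λ(F)(x) > 0. -/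
open Filter Set
open scoped ENNReal

noncomputable section
attribute [local instance] Classical.propDecidable

lemma oslash_zero (t : V) : oslash t 0 = 1 := if_pos rfl

section

variable {X : Type*}

lemma limsupF_mono {S : Set (Set X)} {f g : X → V} (h : f ≤ g) :
    limsupF S f ≤ limsupF S g :=
  iInf₂_mono fun _ _ => iSup₂_mono fun t _ => h t

lemma mem_grill_of_mem_ultrafilter {U : Ultrafilter X} {A : Set X} (hA : A ∈ U) :
    A ∈ grill (U : Filter X) :=
  fun _ hS => Ultrafilter.nonempty_of_mem (U.inter_mem hA hS)

lemma limsupF_theta_of_mem_grill {F : Filter X} {A : Set X} (h : A ∈ grill F) :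
    limsupF F.sets (theta A) = 1 := by
  refine le_antisymm unitInterval.le_one' (le_iInf₂ fun s hs => ?_)
  obtain ⟨t, htA, hts⟩ := h s hs
  exact le_iSup₂_of_le t hts (by simp [theta, htA])

lemma limsupF_theta_of_notMem_grill {F : Filter X} {A : Set X} (h : A ∉ grill F) :
    limsupF F.sets (theta A) = 0 := by
  simp only [grill, mem_ofPred_eq, not_forall] at h
  obtain ⟨s, hs, hempty⟩ := h
  refine le_antisymm (le_trans (iInf₂_le s hs) (iSup₂_le fun t ht => ?_)) unitInterval.nonneg'
  have htA : t ∉ A := fun hA => hempty ⟨t, hA, ht⟩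
  simp [theta, htA]

lemma Contr.lam_le_of_limsupF_eq_one {Λ : CAS X} {g : X → V} (hg : Contr Λ g)
    {F : Filter X} (hF : limsupF F.sets g = 1) (x : X) : Λ.lam F x ≤ g x := by
  simpa [hF, oslash_one] using hg F x

lemma theta_le_adhSet (Λ : CAS X) (A : Set X) : theta A ≤ adhSet Λ A := by
  intro x
  by_cases hx : x ∈ A
  · have hpure : A ∈ (pure x : Ultrafilter X) := Ultrafilter.mem_pure.mpr hx
    calc theta A x = Λ.lam (pure x : Ultrafilter X) x := by
          simp [theta, hx, Λ.centered]
      _ ≤ adhSet Λ A x := le_iSup₂_of_le (pure x) hpure le_rfl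
  · simp [theta, hx]

lemma Contr.adhSet_le {Λ : CAS X} {g : X → V} (hg : Contr Λ g) {A : Set X}
    (hA : theta A ≤ g) : adhSet Λ A ≤ g := by
  intro x
  refine iSup₂_le fun U hU => hg.lam_le_of_limsupF_eq_one ?_ x
  refine le_antisymm unitInterval.le_one' ?_
  calc (1 : V) = limsupF (U : Filter X).sets (theta A) :=
        (limsupF_theta_of_mem_grill (mem_grill_of_mem_ultrafilter hU)).symm
    _ ≤ limsupF (U : Filter X).sets g := limsupF_mono hA

lemma Cop_adhSet (Λ : CAS X) (A : Set X) : Cop Λ (adhSet Λ A) = Cop Λ (theta A) := by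
  unfold Cop
  congr 1
  ext g
  exact and_congr_right fun hg =>
    ⟨(theta_le_adhSet Λ A).trans, hg.adhSet_le⟩

lemma contr_theta_iff (Λ : CAS X) (A : Set X) :
    Contr Λ (theta A) ↔ ∀ F : Filter X, A ∈ grill F → ∀ x : X, 0 < Λ.lam F x → x ∈ A := by
  constructor
  · intro hC F hF x hpos
    by_contra hx
    have hle := hC.lam_le_of_limsupF_eq_one (limsupF_theta_of_mem_grill hF) x
    simp only [theta, if_neg hx] at hle
    exact hpos.not_ge hle
  · intro hclosed F x
    by_cases hF : A ∈ grill F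
    · rw [limsupF_theta_of_mem_grill hF, oslash_one]
      by_cases hx : x ∈ A
      · simp only [theta, if_pos hx]
        exact unitInterval.le_one'
      · simp only [theta, if_neg hx]
        exact not_lt.mp fun hpos => hx (hclosed F hF x hpos)
    · rw [limsupF_theta_of_notMem_grill hF, oslash_zero]
      exact unitInterval.le_one'

end

/-- `C(adh A) = C(θ_A)`, and `θ_A` is a contraction iff `A` is
closed in the convergence `r(λ)` (`x ∈ lim_{r(λ)} F ↔ λ(F)(x) > 0`). -/
theorem stmt17 {X : Type*} (Λ : CAS X) (A : Set X) :
    Cop Λ (adhSet Λ A) = Cop Λ (theta A) ∧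
    (Contr Λ (theta A) ↔
      ∀ F : Filter X, A ∈ grill F → ∀ x : X, 0 < Λ.lam F x → x ∈ A) :=
  ⟨Cop_adhSet Λ A, contr_theta_iff Λ A⟩
end
end
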